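/- Block-diagonal Jacobian structure and lossless error propagation under manifold attractor regularization (MAR limit). Let φ : ℝ → ℝ be differentiable, let M = M_s + M_r, and identify ℝ^M ≅ ℝ^{M_s} × ℝ^{M_r}, writing z = (z^{(s)}, z^{(r)}). Let A_s be an M_s×M_s real matrix, W_s an M_s×L matrix, V_s an L×M_s matrix, b ∈ ℝ^L, and h ∈ ℝ^M, and define the MAR-limit map F : ℝ^M → ℝ^M by F(z) = A·z + W·φ.(V·z + b) + h, where A is the block matrix fromBlocks A_s 0 0 I_{M_r}, W stacks W_s over an M_r×L zero block, V = [V_s | 0_{L×M_r}], and φ.(·) denotes componentwise application. Then F is differentiable, and for every z ∈ ℝ^M its Jacobian equals the block-diagonal matrix fromBlocks (A_s + W_s·D(z)·V_s) 0 0 I_{M_r}, where D(z) = diag(φ'((V_s·z^{(s)} + b)_1), …, φ'((V_s·z^{(s)} + b)_L)). Consequently, for any points z(0), …, z(t−1), the time-ordered product of Jacobians ∏_{k=0}^{t−1} J_F(z(t−1−k)) equals fromBlocks (∏_{k=0}^{t−1} [A_s + W_s·D(z(t−1−k))·V_s]) 0 0 I_{M_r}: error signals propagate without decay or amplification along the M_r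 regularized directions. -/

import Mathlib

open Matrix

/-- Time-ordered composition of continuous linear maps:
`clmCocycle Jf t = Jf (t-1) ∘L ⋯ ∘L Jf 0` (and the identity for `t = 0`), i.e.
`∏_{k=0}^{t-1} Jf (t-1-k)`. -/
def clmCocycle {E : Type*} [NormedAddCommGroup E] [NormedSpace ℝ E]
    (Jf : ℕ → (E →L[ℝ] E)) : ℕ → (E →L[ℝ] E)
  | 0 => ContinuousLinearMap.id ℝ E
  | (t + 1) => (Jf t).comp (clmCocycle Jf t)

/-- Time-ordered product of matrices: `matCocycle Jm t = Jm (t-1) * ⋯ * Jm 0`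
(and `1` for `t = 0`), i.e. `∏_{k=0}^{t-1} Jm (t-1-k)`. -/
def matCocycle {Ms : ℕ} (Jm : ℕ → Matrix (Fin Ms) (Fin Ms) ℝ) :
    ℕ → Matrix (Fin Ms) (Fin Ms) ℝ
  | 0 => 1
  | (t + 1) => Jm t * matCocycle Jm t

/-!
In the MAR limit `F` is the product map of a shallow PLRNN step on `z⁽ˢ⁾` and a translation on
`z⁽ʳ⁾`, so its derivative is the product of the shPLRNN Jacobian `A_s + W_s D V_s` with the
identity. Compositions of product maps are computed factorwise, which gives the Jacobian products.
-/

section Jacobian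

variable {m n : Type*} [Fintype m] [Fintype n] [DecidableEq n] {φ : ℝ → ℝ}

theorem hasFDerivAt_pi_comp_apply {y : n → ℝ} (hφ : ∀ l, DifferentiableAt ℝ φ (y l)) :
    HasFDerivAt (fun y : n → ℝ => fun l => φ (y l))
      (diagonal fun l => deriv φ (y l)).mulVecLin.toContinuousLinearMap y := by
  refine hasFDerivAt_pi'.2 fun l => ?_
  refine ((hφ l).hasDerivAt.comp_hasFDerivAt y (hasFDerivAt_apply l y)).congr_fderiv ?_
  ext v
  simp [mulVec_diagonal, mul_comm]

theorem hasFDerivAt_shallowPLRNN (A : Matrix m m ℝ) (W : Matrix m n ℝ) (V : Matrix n m ℝ)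
    (b : n → ℝ) (c : m → ℝ) {x : m → ℝ} (hφ : ∀ l, DifferentiableAt ℝ φ ((V *ᵥ x + b) l)) :
    HasFDerivAt (fun x => A *ᵥ x + W *ᵥ (fun l => φ ((V *ᵥ x + b) l)) + c)
      (A + W * diagonal (fun l => deriv φ ((V *ᵥ x + b) l)) * V).mulVecLin.toContinuousLinearMap
      x := by
  have hpre : HasFDerivAt (fun x => V *ᵥ x + b) V.mulVecLin.toContinuousLinearMap x :=
    V.mulVecLin.toContinuousLinearMap.hasFDerivAt.add_const b
  have hact := (hasFDerivAt_pi_comp_apply hφ).comp x hpre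
  have hW := W.mulVecLin.toContinuousLinearMap.hasFDerivAt.comp x hact
  refine ((A.mulVecLin.toContinuousLinearMap.hasFDerivAt.add hW).add_const c).congr_fderiv ?_
  simp only [Matrix.mul_assoc, mulVecLin_mul, map_add]
  rfl

end Jacobian

section Cocycle

variable {E F : Type*} [NormedAddCommGroup E] [NormedSpace ℝ E]
  [NormedAddCommGroup F] [NormedSpace ℝ F]

theorem clmCocycle_prodMap (J : ℕ → E →L[ℝ] E) (K : ℕ → F →L[ℝ] F) (t : ℕ) :
    clmCocycle (fun k => (J k).prodMap (K k)) t = (clmCocycle J t).prodMap (clmCocycle K t) := by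
  induction t with
  | zero => rfl
  | succ t ih =>
    simp only [clmCocycle, ih]
    rfl

theorem clmCocycle_id (t : ℕ) : clmCocycle (fun _ => ContinuousLinearMap.id ℝ E) t =
    ContinuousLinearMap.id ℝ E := by
  induction t with
  | zero => rfl
  | succ t ih => simp only [clmCocycle, ih, ContinuousLinearMap.id_comp]

theorem clmCocycle_mulVecLin {n : ℕ} (M : ℕ → Matrix (Fin n) (Fin n) ℝ) (t : ℕ) :
    clmCocycle (fun k => (M k).mulVecLin.toContinuousLinearMap) t =
      (matCocycle M t).mulVecLin.toContinuousLinearMap := by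
  induction t with
  | zero => ext; simp [clmCocycle, matCocycle]
  | succ t ih =>
    simp only [clmCocycle, matCocycle, ih, mulVecLin_mul]
    rfl

end Cocycle

/-- **Block-diagonal Jacobian structure under manifold attractor regularization (MAR
limit).** Identifying `ℝ^M ≅ ℝ^{M_s} × ℝ^{M_r}`, the MAR-limit map
`F(z) = (A_s z⁽ˢ⁾ + W_s φ.(V_s z⁽ˢ⁾ + b) + h⁽ˢ⁾, z⁽ʳ⁾ + h⁽ʳ⁾)` (i.e.
`F(z) = A z + W φ.(V z + b) + h` with `A = fromBlocks A_s 0 0 I`, `W = [W_s; 0]`,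
`V = [V_s | 0]`) is differentiable with block-diagonal Jacobian
`fromBlocks (A_s + W_s D(z) V_s) 0 0 I`, and the time-ordered Jacobian products
decompose blockwise, so error signals propagate without decay or amplification along the
`M_r` regularized directions. -/
theorem mar_blockdiagonal_jacobian (Ms Mr L : ℕ)
    (φ : ℝ → ℝ) (hφ : Differentiable ℝ φ)
    (As : Matrix (Fin Ms) (Fin Ms) ℝ) (Ws : Matrix (Fin Ms) (Fin L) ℝ)
    (Vs : Matrix (Fin L) (Fin Ms) ℝ) (b : Fin L → ℝ)
    (h : (Fin Ms → ℝ) × (Fin Mr → ℝ))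
    (F : (Fin Ms → ℝ) × (Fin Mr → ℝ) → (Fin Ms → ℝ) × (Fin Mr → ℝ))
    (hF : ∀ z : (Fin Ms → ℝ) × (Fin Mr → ℝ),
      F z = (As.mulVec z.1 + Ws.mulVec (fun l => φ ((Vs.mulVec z.1 + b) l)) + h.1,
             z.2 + h.2))
    (D : (Fin Ms → ℝ) × (Fin Mr → ℝ) → Matrix (Fin L) (Fin L) ℝ)
    (hD : ∀ z, D z = Matrix.diagonal (fun l => deriv φ ((Vs.mulVec z.1 + b) l))) :
    Differentiable ℝ F ∧
    (∀ z : (Fin Ms → ℝ) × (Fin Mr → ℝ),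
      fderiv ℝ F z =
        ((As + Ws * D z * Vs).mulVecLin.toContinuousLinearMap).prodMap
          (ContinuousLinearMap.id ℝ (Fin Mr → ℝ))) ∧
    (∀ (t : ℕ) (zs : ℕ → (Fin Ms → ℝ) × (Fin Mr → ℝ)),
      clmCocycle (fun k => fderiv ℝ F (zs k)) t =
        ((matCocycle (fun k => As + Ws * D (zs k) * Vs) t).mulVecLin.toContinuousLinearMap).prodMap
          (ContinuousLinearMap.id ℝ (Fin Mr → ℝ))) := by
  have hF_prodMap : F = Prod.map (fun x => As *ᵥ x + Ws *ᵥ (fun l => φ ((Vs *ᵥ x + b) l)) + h.1)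
      (· + h.2) := funext hF
  have hJacobian : ∀ z, HasFDerivAt F
      ((As + Ws * D z * Vs).mulVecLin.toContinuousLinearMap.prodMap
        (ContinuousLinearMap.id ℝ (Fin Mr → ℝ))) z := fun z => by
    rw [hF_prodMap, hD]
    exact (hasFDerivAt_shallowPLRNN As Ws Vs b h.1 fun _ => hφ _).prodMap z
      ((hasFDerivAt_id _).add_const _)
  refine ⟨fun z => (hJacobian z).differentiableAt, fun z => (hJacobian z).fderiv, fun t zs => ?_⟩
  simp only [fun k => (hJacobian (zs k)).fderiv]
  rw [clmCocycle_prodMap, clmCocycle_mulVecLin, clmCocycle_id]
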